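/- arXiv:2210.15730 — 3 statements merged into one kernel-verified Lean document; each statement's English description precedes it below -/
import Mathlib

section
/- Let 0 < a ≤ 1 and κ = 1/2 − a/4 (so that λ = (2κ−1)/a = −1/2). Then there exists x ∈ ℝ with |b_{κ,a}(x)| > 1; that is, sup_{x∈ℝ} |b_{κ,a}(x)| > 1. -/
open Real MeasureTheory Finset

/-- Normalized Bessel function j_lambda(v). -/
noncomputable def nbessel (l v : ℝ) : ℝ :=
  Real.Gamma (l + 1) *
    ∑' k : ℕ, (-1 : ℝ) ^ k / (Nat.factorial k * Real.Gamma (k + l + 1)) * (v / 2) ^ (2 * k)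

/-- Kernel of the one-dimensional (kappa,a)-generalized Fourier transform. -/
noncomputable def bker (κ a : ℝ) (x : ℝ) : ℂ :=
  (nbessel ((2 * κ - 1) / a) ((2 / a) * |x| ^ (a / 2)) : ℂ)
    + Complex.exp (-(Real.pi / a) * Complex.I) * ((a ^ (-(2 / a)) : ℝ) : ℂ)
      * ((Real.Gamma ((2 * κ - 1) / a + 1) / Real.Gamma ((2 * κ - 1) / a + 1 + 2 / a) : ℝ) : ℂ)
      * (x : ℂ) * (nbessel ((2 * κ - 1) / a + 2 / a) ((2 / a) * |x| ^ (a / 2)) : ℂ)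

lemma gamma_half (k : ℕ) : Real.Gamma (k + 1/2)
    = (Nat.factorial (2*k)) * Real.sqrt π / (4^k * Nat.factorial k) := by
  induction k with
  | zero => norm_num [Real.Gamma_one_half_eq]
  | succ k ih =>
    have h0 : ((k:ℝ) + 1/2) ≠ 0 := by positivity
    have : ((k+1 : ℕ) : ℝ) + 1/2 = ((k:ℝ) + 1/2) + 1 := by push_cast; ring
    rw [this, Real.Gamma_add_one h0, ih]
    have e1 : (2*(k+1)) = (2*k+1)+1 := by ring
    rw [e1, Nat.factorial_succ, Nat.factorial_succ, Nat.factorial_succ]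
    have h4 : (4:ℝ)^k ≠ 0 := by positivity
    have hf : ((Nat.factorial k) : ℝ) ≠ 0 := by positivity
    push_cast
    field_simp
    ring

lemma nbessel_cos (v : ℝ) : nbessel (-(1/2)) v = Real.cos v := by
  rw [nbessel, Real.cos_eq_tsum]
  have h1 : (-(1/2) : ℝ) + 1 = 1/2 := by norm_num
  rw [h1, Real.Gamma_one_half_eq, ← tsum_mul_left]
  congr 1
  funext k
  have h2 : ((k:ℝ) + -(1/2) + 1) = (k:ℝ) + 1/2 := by ring
  rw [h2, gamma_half k]
  have hs : Real.sqrt π ≠ 0 := by positivity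
  have hf : ((Nat.factorial k) : ℝ) ≠ 0 := by positivity
  have hf2 : ((Nat.factorial (2*k)) : ℝ) ≠ 0 := by positivity
  have h4 : (4:ℝ)^k ≠ 0 := by positivity
  have h24 : (4:ℝ)^k = 2^(2*k) := by rw [pow_mul]; norm_num
  field_simp
  rw [h24, ← mul_pow]; congr 1; ring

lemma nbessel_pos (μ : ℝ) (hμ : 3/2 ≤ μ) : 0 < nbessel μ π := by
  have hpi2 : π^2 < 10 := by nlinarith [Real.pi_lt_d2, Real.pi_pos]
  set t : ℕ → ℝ := fun k => (π/2)^(2*k) / (Nat.factorial k * Real.Gamma (k + μ + 1)) with ht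
  set f : ℕ → ℝ := fun k =>
    (-1 : ℝ) ^ k / (Nat.factorial k * Real.Gamma (k + μ + 1)) * (π / 2) ^ (2 * k) with hf
  have hΓpos : ∀ k : ℕ, 0 < Real.Gamma (k + μ + 1) := by
    intro k
    apply Real.Gamma_pos_of_pos
    have : (0:ℝ) ≤ k := Nat.cast_nonneg k
    linarith
  have htpos : ∀ k, 0 < t k := by
    intro k
    apply div_pos (by positivity)
    exact mul_pos (by positivity) (hΓpos k)
  have hfe : ∀ k, f k = (-1:ℝ)^k * t k := by
    intro k; simp only [hf, ht]; ring
  have hrec : ∀ k : ℕ, t (k+1) = t k * ((π/2)^2 / ((k+1) * (k+μ+1))) := by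
    intro k
    have h0 : ((k:ℝ) + μ + 1) ≠ 0 := by
      have hkk : (0:ℝ) ≤ k := Nat.cast_nonneg k
      exact ne_of_gt (by linarith)
    simp only [ht]
    have e1 : ((k+1:ℕ):ℝ) + μ + 1 = ((k:ℝ) + μ + 1) + 1 := by push_cast; ring
    rw [e1, Real.Gamma_add_one h0, Nat.factorial_succ]
    have e2 : 2*(k+1) = 2*k + 2 := by ring
    rw [e2, pow_add]
    have hΓ := hΓpos k
    have hfk : ((Nat.factorial k):ℝ) ≠ 0 := by positivity
    have hk1 : ((k:ℝ)+1) ≠ 0 := by positivity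
    push_cast
    field_simp
  have hhalf : ∀ k : ℕ, 1 ≤ k → t (k+1) ≤ t k * (1/2) := by
    intro k hk
    rw [hrec k]
    apply mul_le_mul_of_nonneg_left _ (htpos k).le
    rw [div_le_iff₀ (by have : (0:ℝ) ≤ k := Nat.cast_nonneg k; nlinarith)]
    have hk' : (1:ℝ) ≤ k := by exact_mod_cast hk
    nlinarith
  have hgeom : ∀ j : ℕ, t (3+j) ≤ t 2 * (1/2)^(j+1) := by
    intro j
    induction j with
    | zero => simpa using hhalf 2 (by norm_num)
    | succ j ih =>
      have : t (3+(j+1)) = t ((3+j)+1) := by ring_nf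
      rw [this]
      calc t ((3+j)+1) ≤ t (3+j) * (1/2) := hhalf _ (by omega)
        _ ≤ (t 2 * (1/2)^(j+1)) * (1/2) := by nlinarith
        _ = t 2 * (1/2)^(j+1+1) := by ring
  have hnorm : ∀ k, ‖f k‖ = t k := by
    intro k
    rw [hfe k, norm_mul]
    simp [abs_of_pos (htpos k)]
  have hsum : Summable f := by
    apply summable_of_ratio_norm_eventually_le (r := 1/2) (by norm_num)
    filter_upwards [Filter.eventually_ge_atTop 1] with k hk
    rw [hnorm, hnorm]
    linarith [hhalf k hk]
  have hsum3 : Summable (fun i => f (i+3)) := (summable_nat_add_iff 3).2 hsum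
  have hsumt3 : Summable (fun i => t (i+3)) := by
    have := hsum3.abs
    refine this.congr (fun i => ?_)
    rw [← hnorm (i+3)]; simp [Real.norm_eq_abs]
  have hgeosum : Summable (fun j : ℕ => t 2 * (1/2:ℝ)^(j+1)) := by
    have hg : Summable (fun j : ℕ => (1/2:ℝ)^j) :=
      summable_geometric_of_lt_one (by norm_num) (by norm_num)
    exact ((hg.mul_right (1/2)).congr (fun n => (pow_succ (1/2:ℝ) n).symm)).mul_left (t 2)
  have htail : |∑' i, f (i+3)| ≤ t 2 := by
    calc |∑' i, f (i+3)| ≤ ∑' i, ‖f (i+3)‖ := by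
          simpa [Real.norm_eq_abs] using norm_tsum_le_tsum_norm (f := fun i => f (i+3)) (by
            apply hsum3.abs.congr; intro n; simp [Real.norm_eq_abs])
      _ = ∑' i, t (i+3) := by
          apply tsum_congr; intro i; exact hnorm (i+3)
      _ ≤ ∑' j, t 2 * (1/2:ℝ)^(j+1) := by
          apply Summable.tsum_le_tsum _ hsumt3 hgeosum
          intro j
          have := hgeom j
          simpa [add_comm 3 j] using this
      _ = t 2 * 1 := by
          rw [tsum_mul_left]
          congr 1
          have : ∑' (j:ℕ), (1/2:ℝ)^(j+1) = (∑' (j:ℕ), (1/2:ℝ)^j) * (1/2) := by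
            rw [← tsum_mul_right]; apply tsum_congr; intro j; rw [pow_succ]
          rw [this, tsum_geometric_of_lt_one (by norm_num) (by norm_num)]
          norm_num
      _ = t 2 := mul_one _
  have hsplit := Summable.sum_add_tsum_nat_add 3 hsum
  have hS : ∑' k, f k = (f 0 + f 1 + f 2) + ∑' i, f (i+3) := by
    rw [← hsplit]
    congr 1
    simp [Finset.sum_range_succ]
  have hf0 : f 0 = t 0 := by rw [hfe]; simp
  have hf1 : f 1 = -(t 1) := by rw [hfe]; simp
  have hf2 : f 2 = t 2 := by rw [hfe]; norm_num
  have ht1 : t 1 < t 0 := by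
    have h := hrec 0
    have hq : (π/2)^2 / ((((0:ℕ):ℝ)+1) * (((0:ℕ):ℝ)+μ+1)) < 1 := by
      rw [div_lt_one (by push_cast; nlinarith)]
      push_cast; nlinarith
    calc t 1 = t 0 * ((π/2)^2 / ((((0:ℕ):ℝ)+1) * (((0:ℕ):ℝ)+μ+1))) := h
      _ < t 0 * 1 := by exact mul_lt_mul_of_pos_left hq (htpos 0)
      _ = t 0 := mul_one _
  have hSpos : 0 < ∑' k, f k := by
    rw [hS, hf0, hf1, hf2]
    have := abs_le.1 htail
    linarith
  rw [nbessel]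
  have : 0 < Real.Gamma (μ+1) := Real.Gamma_pos_of_pos (by linarith)
  exact mul_pos this hSpos

/-- for 0 < a ≤ 1 and κ = 1/2 - a/4 the sup norm of the kernel exceeds 1. -/
theorem stmt1 (a κ : ℝ) (ha0 : 0 < a) (ha1 : a ≤ 1) (hκ : κ = 1 / 2 - a / 4) :
    ∃ x : ℝ, 1 < ‖bker κ a x‖ := by
  have hl : (2 * κ - 1) / a = -(1/2) := by
    rw [hκ]; field_simp; ring
  have h2a : 2 ≤ 2/a := by rw [le_div_iff₀ ha0]; linarith
  have hμ : 3/2 ≤ -(1/2) + 2/a := by linarith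
  have hJ : 0 < nbessel (-(1/2) + 2/a) π := nbessel_pos _ hμ
  set J : ℝ := nbessel (-(1/2) + 2/a) π with hJdef
  set c1 : ℝ := a ^ (-(2/a)) with hc1
  have hc1p : 0 < c1 := Real.rpow_pos_of_pos ha0 _
  set c2 : ℝ := Real.Gamma (-(1/2) + 1) / Real.Gamma (-(1/2) + 1 + 2/a) with hc2
  have hc2p : 0 < c2 := by
    apply div_pos (Real.Gamma_pos_of_pos (by norm_num)) (Real.Gamma_pos_of_pos (by linarith))
  set tt : ℝ := (a*π/2) ^ (2/a) with htt
  have http : 0 < tt := Real.rpow_pos_of_pos (by positivity) _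
  set s : ℝ := if Real.cos (π/a) ≤ 0 then 1 else -1 with hs
  have hs1 : s = 1 ∨ s = -1 := by
    by_cases h : Real.cos (π/a) ≤ 0 <;> simp [hs, h]
  have hcross : s * Real.cos (π/a) ≤ 0 := by
    by_cases h : Real.cos (π/a) ≤ 0
    · simp only [hs, if_pos h]; linarith
    · simp only [hs, if_neg h]; push_neg at h; nlinarith
  have hsq : s^2 = 1 := by rcases hs1 with h | h <;> rw [h] <;> norm_num
  have habs : |s*tt| = tt := by
    rcases hs1 with h | h <;> rw [h] <;>
      simp [abs_of_pos http, abs_of_neg, neg_mul, one_mul]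
  refine ⟨s*tt, ?_⟩
  have harg : (2/a) * |s*tt| ^ (a/2) = π := by
    rw [habs, htt, ← Real.rpow_mul (by positivity)]
    have h1 : (2/a) * (a/2) = 1 := by field_simp
    rw [h1, Real.rpow_one]
    field_simp
  have hP : 0 < c1 * c2 * tt * J := by positivity
  set P : ℝ := c1 * c2 * tt * J with hPdef
  have hE : Complex.exp (-(↑π/↑a) * Complex.I)
      = (↑(Real.cos (π/a)) : ℂ) - ↑(Real.sin (π/a)) * Complex.I := by
    have h0 : (-(↑π/↑a) : ℂ) = ((-(π/a) : ℝ) : ℂ) := by push_cast; ring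
    rw [h0, Complex.exp_mul_I, ← Complex.ofReal_cos, ← Complex.ofReal_sin,
      Real.cos_neg, Real.sin_neg]
    push_cast; ring
  have hz : bker κ a (s*tt)
      = (↑(-1 + s * P * Real.cos (π/a)) : ℂ) + ↑(-(s * P * Real.sin (π/a))) * Complex.I := by
    rw [bker, hl, harg, nbessel_cos, Real.cos_pi, hE]
    rw [hPdef, hc1, hc2, hJdef]
    push_cast
    ring
  have hnsq : ‖bker κ a (s*tt)‖^2
      = (-1 + s * P * Real.cos (π/a))^2 + (-(s * P * Real.sin (π/a)))^2 := by
    rw [hz, Complex.sq_norm, Complex.normSq_add_mul_I]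
  have expand : (-1 + s * P * Real.cos (π/a))^2 + (-(s * P * Real.sin (π/a)))^2
      = 1 - 2*(P*(s*Real.cos (π/a))) + P^2 := by
    linear_combination (s^2*P^2) * (Real.sin_sq_add_cos_sq (π/a)) + P^2 * hsq
  have key : 1 < ‖bker κ a (s*tt)‖^2 := by
    rw [hnsq, expand]
    nlinarith [mul_nonneg hP.le (neg_nonneg.2 hcross), mul_pos hP hP]
  nlinarith [norm_nonneg (bker κ a (s*tt))]
end

section
/- Let a ∈ (1,2) ∪ (2,∞) and κ ≥ 0. Then there exists x ∈ ℝ with |b_{κ,a}(x)| > 1; that is, sup_{x∈ℝ} |b_{κ,a}(x)| > 1 (the one-dimensional case of the theorem that the kernel of the (κ,a)-generalized Fourier transform has uniform norm greater than 1 for these parameters). -/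
open Real MeasureTheory Finset

noncomputable def bterm (l v : ℝ) (k : ℕ) : ℝ :=
  (-1:ℝ)^k / (Nat.factorial k * Real.Gamma (k + l + 1)) * (v/2)^(2*k)

lemma nbessel_eq (l v : ℝ) : nbessel l v = Real.Gamma (l+1) * ∑' k, bterm l v k := rfl

lemma gamma_prod_le (l : ℝ) (hl : 0 < l + 1) : ∀ k : ℕ,
    Real.Gamma (l + 1) * (l + 1) ^ k ≤ Real.Gamma (k + l + 1) := by
  intro k
  induction k with
  | zero => simp
  | succ n ih =>
    have hn : (0:ℝ) ≤ (n:ℝ) := Nat.cast_nonneg n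
    have hpos : (0:ℝ) < (n:ℝ) + l + 1 := by linarith
    have hΓ : 0 < Real.Gamma ((n:ℝ) + l + 1) := Real.Gamma_pos_of_pos hpos
    have hcast : ((n+1 : ℕ) : ℝ) + l + 1 = ((n:ℝ) + l + 1) + 1 := by push_cast; ring
    rw [hcast, Real.Gamma_add_one (ne_of_gt hpos)]
    calc Real.Gamma (l+1) * (l+1)^(n+1) = (l+1) * (Real.Gamma (l+1) * (l+1)^n) := by ring
      _ ≤ (l+1) * Real.Gamma ((n:ℝ)+l+1) := by
          exact mul_le_mul_of_nonneg_left ih hl.le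
      _ ≤ ((n:ℝ)+l+1) * Real.Gamma ((n:ℝ)+l+1) := by nlinarith

lemma nbessel_sub_one_abs_le (l v : ℝ) (hl : 0 < l + 1) :
    |nbessel l v - 1| ≤ ((v/2)^2/(l+1)) * Real.exp ((v/2)^2/(l+1)) := by
  obtain ⟨w, hwdef⟩ : ∃ w : ℝ, w = (v/2)^2 := ⟨_, rfl⟩
  obtain ⟨u, hudef⟩ : ∃ u : ℝ, u = w/(l+1) := ⟨_, rfl⟩
  rw [← hwdef, ← hudef]
  have hw0 : (0:ℝ) ≤ w := hwdef ▸ sq_nonneg _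
  have hu0 : 0 ≤ u := hudef ▸ div_nonneg hw0 hl.le
  have hG : 0 < Real.Gamma (l+1) := Real.Gamma_pos_of_pos hl
  have hΓk : ∀ k : ℕ, 0 < Real.Gamma ((k:ℝ) + l + 1) := fun k =>
    Real.Gamma_pos_of_pos (by have := Nat.cast_nonneg (α := ℝ) k; linarith)
  have hfack : ∀ k : ℕ, (0:ℝ) < (Nat.factorial k : ℝ) := fun k => by
    exact_mod_cast Nat.factorial_pos k
  have habs : ∀ k, |bterm l v k| = w^k / (Nat.factorial k * Real.Gamma ((k:ℝ) + l + 1)) := by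
    intro k
    have hpw : (v/2)^(2*k) = w^k := by rw [hwdef, ← pow_mul, mul_comm 2 k]
    have hd : (0:ℝ) < (Nat.factorial k : ℝ) * Real.Gamma ((k:ℝ) + l + 1) :=
      mul_pos (hfack k) (hΓk k)
    rw [bterm, hpw, abs_mul, abs_div, abs_pow, abs_neg, abs_one, one_pow,
      abs_of_pos hd, abs_of_nonneg (pow_nonneg hw0 k)]
    ring
  have hle : ∀ k, |bterm l v k| ≤ (1 / Real.Gamma (l+1)) * (u^k / Nat.factorial k) := by
    intro k
    rw [habs k]
    have h1 := gamma_prod_le l hl k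
    have hlp : (0:ℝ) < (l+1)^k := pow_pos hl k
    have heq : (1 / Real.Gamma (l+1)) * (u^k / Nat.factorial k)
        = w^k / (Nat.factorial k * (Real.Gamma (l+1) * (l+1)^k)) := by
      rw [hudef, div_pow]
      ring
    rw [heq]
    have hd2 : (0:ℝ) < (Nat.factorial k : ℝ) * (Real.Gamma (l+1) * (l+1)^k) :=
      mul_pos (hfack k) (mul_pos hG hlp)
    apply div_le_div_of_nonneg_left (pow_nonneg hw0 k) hd2
    exact mul_le_mul_of_nonneg_left h1 (hfack k).le
  have hsum_exp : Summable (fun k : ℕ => (1 / Real.Gamma (l+1)) * (u^k / Nat.factorial k)) :=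
    (Real.summable_pow_div_factorial u).mul_left _
  have hsumabs : Summable (fun k => |bterm l v k|) :=
    Summable.of_nonneg_of_le (fun k => abs_nonneg _) hle hsum_exp
  have hsum : Summable (bterm l v) := hsumabs.of_abs
  have hf0 : bterm l v 0 = 1 / Real.Gamma (l+1) := by
    rw [bterm]
    norm_num
  have hsplit : ∑' k, bterm l v k = bterm l v 0 + ∑' k, bterm l v (k+1) := Summable.tsum_eq_zero_add hsum
  have hnb : nbessel l v - 1 = Real.Gamma (l+1) * ∑' k, bterm l v (k+1) := by
    rw [nbessel_eq, hsplit, hf0, mul_add, mul_one_div, div_self hG.ne']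
    ring
  have htail_le : ∀ k : ℕ,
      |bterm l v (k+1)| ≤ (1 / Real.Gamma (l+1)) * (u * (u^k / Nat.factorial k)) := by
    intro k
    refine (hle (k+1)).trans ?_
    have hfle : (Nat.factorial k : ℝ) ≤ (Nat.factorial (k+1) : ℝ) := by
      exact_mod_cast Nat.factorial_le (Nat.le_succ k)
    have h2 : u^(k+1) / (Nat.factorial (k+1) : ℝ) ≤ u^(k+1) / (Nat.factorial k : ℝ) :=
      div_le_div_of_nonneg_left (pow_nonneg hu0 _) (hfack k) hfle
    calc (1 / Real.Gamma (l+1)) * (u^(k+1) / Nat.factorial (k+1))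
        ≤ (1 / Real.Gamma (l+1)) * (u^(k+1) / Nat.factorial k) := by
          exact mul_le_mul_of_nonneg_left h2 (by positivity)
      _ = (1 / Real.Gamma (l+1)) * (u * (u^k / Nat.factorial k)) := by rw [pow_succ]; ring
  have hsum_tail : Summable (fun k => bterm l v (k+1)) := (summable_nat_add_iff 1).mpr hsum
  have hsum_tail_abs : Summable (fun k => |bterm l v (k+1)|) := (summable_nat_add_iff 1).mpr hsumabs
  have hsum2 : Summable (fun k : ℕ => (1 / Real.Gamma (l+1)) * (u * (u^k / Nat.factorial k))) :=
    ((Real.summable_pow_div_factorial u).mul_left u).mul_left _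
  have h1 : |∑' k, bterm l v (k+1)| ≤ ∑' k, |bterm l v (k+1)| := by
    simpa [Real.norm_eq_abs] using norm_tsum_le_tsum_norm (f := fun k => bterm l v (k+1))
      (by simpa [Real.norm_eq_abs] using hsum_tail_abs)
  have h2 : ∑' k, |bterm l v (k+1)|
      ≤ ∑' k : ℕ, (1 / Real.Gamma (l+1)) * (u * (u^k / Nat.factorial k)) :=
    Summable.tsum_le_tsum htail_le hsum_tail_abs hsum2
  have h3 : ∑' k : ℕ, (1 / Real.Gamma (l+1)) * (u * (u^k / Nat.factorial k))
      = (1 / Real.Gamma (l+1)) * (u * ∑' k : ℕ, u^k / Nat.factorial k) := by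
    rw [tsum_mul_left, tsum_mul_left]
  have hexp : ∑' k : ℕ, u^k / (Nat.factorial k : ℝ) ≤ Real.exp u := by
    apply Real.tsum_le_of_sum_range_le (fun n => by positivity)
    intro n
    exact Real.sum_le_exp_of_nonneg hu0 n
  have hfinal : |∑' k, bterm l v (k+1)| ≤ (1 / Real.Gamma (l+1)) * (u * Real.exp u) := by
    refine h1.trans (h2.trans ?_)
    rw [h3]
    have : u * ∑' k : ℕ, u^k / (Nat.factorial k : ℝ) ≤ u * Real.exp u :=
      mul_le_mul_of_nonneg_left hexp hu0
    exact mul_le_mul_of_nonneg_left this (by positivity)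
  calc |nbessel l v - 1| = Real.Gamma (l+1) * |∑' k, bterm l v (k+1)| := by
        rw [hnb, abs_mul, abs_of_pos hG]
    _ ≤ Real.Gamma (l+1) * ((1 / Real.Gamma (l+1)) * (u * Real.exp u)) :=
        mul_le_mul_of_nonneg_left hfinal hG.le
    _ = u * Real.exp u := by
        rw [one_div, ← mul_assoc, mul_inv_cancel₀ hG.ne', one_mul]

lemma norm_sq_form (A t ρ : ℝ) :
    ‖(A:ℂ) + Complex.exp ((t:ℂ) * Complex.I) * (ρ:ℂ)‖^2
      = A^2 + 2*A*ρ*Real.cos t + ρ^2 := by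
  have hz : (A:ℂ) + Complex.exp ((t:ℂ) * Complex.I) * (ρ:ℂ)
      = ((A + ρ * Real.cos t : ℝ) : ℂ) + ((ρ * Real.sin t : ℝ) : ℂ) * Complex.I := by
    rw [Complex.exp_mul_I, ← Complex.ofReal_cos, ← Complex.ofReal_sin]
    push_cast
    ring
  rw [hz, Complex.sq_norm, Complex.normSq_add_mul_I]
  have h := Real.sin_sq_add_cos_sq t
  nlinarith [h]


set_option maxHeartbeats 1000000 in
/-- for a in (1,2) ∪ (2,∞) and κ ≥ 0 the sup norm of the kernel exceeds 1. -/
theorem stmt2 (a κ : ℝ) (ha : (1 < a ∧ a < 2) ∨ 2 < a) (hκ : 0 ≤ κ) :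
    ∃ x : ℝ, 1 < ‖bker κ a x‖ := by
  have ha1 : 1 < a := by rcases ha with ⟨h, _⟩ | h <;> linarith
  have ha0 : 0 < a := by linarith
  have hπ := Real.pi_pos
  have he1 : 0 < Real.exp 1 := Real.exp_pos 1
  have he2 : 2 ≤ Real.exp 1 := by have := Real.add_one_le_exp 1; linarith
  have h2a : 0 < 2 / a := by positivity
  have hl1 : 0 < (2 * κ - 1) / a + 1 := by
    have h : (2 * κ - 1) / a + 1 = (2 * κ - 1 + a) / a := by field_simp
    rw [h]; exact div_pos (by linarith) ha0
  have hl2 : 0 < (2 * κ - 1) / a + 2 / a + 1 := by linarith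
  -- the cosine is nonzero
  have hcne : Real.cos (Real.pi / a) ≠ 0 := by
    rcases ha with ⟨h1, h2⟩ | h2
    · have hx1 : Real.pi / 2 < Real.pi / a := div_lt_div_of_pos_left hπ ha0 h2
      have hx2 : Real.pi / a < Real.pi + Real.pi / 2 := by
        have h3 : Real.pi / a < Real.pi / 1 := div_lt_div_of_pos_left hπ one_pos h1
        rw [div_one] at h3; linarith
      exact (Real.cos_neg_of_pi_div_two_lt_of_lt hx1 hx2).ne
    · have hx1 : Real.pi / a < Real.pi / 2 := div_lt_div_of_pos_left hπ two_pos h2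
      have hx0 : 0 < Real.pi / a := div_pos hπ ha0
      exact (Real.cos_pos_of_mem_Ioo ⟨by linarith, hx1⟩).ne'
  obtain ⟨cabs, hcabs⟩ : ∃ t : ℝ, t = |Real.cos (Real.pi / a)| := ⟨_, rfl⟩
  have hcabs0 : 0 < cabs := hcabs ▸ abs_pos.mpr hcne
  obtain ⟨CR, hCR⟩ : ∃ t : ℝ, t = a ^ (-(2 / a)) *
      (Real.Gamma ((2 * κ - 1) / a + 1) / Real.Gamma ((2 * κ - 1) / a + 1 + 2 / a)) := ⟨_, rfl⟩
  have hCR0 : 0 < CR := by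
    rw [hCR]
    exact mul_pos (Real.rpow_pos_of_pos ha0 _)
      (div_pos (Real.Gamma_pos_of_pos hl1) (Real.Gamma_pos_of_pos (by linarith)))
  obtain ⟨L1, hL1⟩ : ∃ t : ℝ, t = (2 * κ - 1) / a + 1 := ⟨_, rfl⟩
  obtain ⟨L2, hL2⟩ : ∃ t : ℝ, t = (2 * κ - 1) / a + 2 / a + 1 := ⟨_, rfl⟩
  have hL10 : 0 < L1 := hL1 ▸ hl1
  have hL20 : 0 < L2 := hL2 ▸ hl2
  obtain ⟨K, hK⟩ : ∃ t : ℝ, t = a ^ 2 * L1 * (CR * cabs) / (5 * Real.exp 1) := ⟨_, rfl⟩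
  have hK0 : 0 < K := by
    rw [hK]; apply div_pos (by positivity) (by positivity)
  -- choice of ε
  obtain ⟨ε, hεdef⟩ : ∃ t : ℝ, t = min (min 1 (L1 / (3 * Real.exp 1)))
      (min (L2 / (3 * Real.exp 1)) (K ^ ((1:ℝ) / (a - 1)) / 2)) := ⟨_, rfl⟩
  have hKp0 : 0 < K ^ ((1:ℝ) / (a - 1)) := Real.rpow_pos_of_pos hK0 _
  have hε0 : 0 < ε := by
    rw [hεdef]
    apply lt_min (lt_min one_pos (by positivity)) (lt_min (by positivity) (by positivity))
  have hε1 : ε ≤ 1 := hεdef ▸ le_trans (min_le_left _ _) (min_le_left _ _)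
  have hεA : ε ≤ L1 / (3 * Real.exp 1) := hεdef ▸ le_trans (min_le_left _ _) (min_le_right _ _)
  have hεB : ε ≤ L2 / (3 * Real.exp 1) := hεdef ▸ le_trans (min_le_right _ _) (min_le_left _ _)
  have hεK : ε ≤ K ^ ((1:ℝ) / (a - 1)) / 2 :=
    hεdef ▸ le_trans (min_le_right _ _) (min_le_right _ _)
  -- rpow facts about ε
  have hεa0 : 0 < ε ^ a := Real.rpow_pos_of_pos hε0 a
  have hεa_le : ε ^ a ≤ ε := by
    calc ε ^ a ≤ ε ^ (1:ℝ) := Real.rpow_le_rpow_of_exponent_ge hε0 hε1 (by linarith)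
      _ = ε := Real.rpow_one ε
  have hεa_eq : ε ^ a = ε ^ (a - 1) * ε := by
    conv_lhs => rw [show a = (a - 1) + 1 by ring]
    rw [Real.rpow_add_one hε0.ne' (a - 1)]
  have hKpow : (K ^ ((1:ℝ) / (a - 1))) ^ (a - 1) = K := by
    rw [one_div]
    exact Real.rpow_inv_rpow hK0.le (by linarith)
  have hεa1 : ε ^ (a - 1) < K := by
    have h1 : ε < K ^ ((1:ℝ) / (a - 1)) := lt_of_le_of_lt hεK (by linarith)
    calc ε ^ (a - 1) < (K ^ ((1:ℝ) / (a - 1))) ^ (a - 1) :=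
          Real.rpow_lt_rpow hε0.le h1 (by linarith)
      _ = K := hKpow
  -- sign choice and the point x
  obtain ⟨σ, hσ⟩ : ∃ s : ℝ, s = if 0 ≤ Real.cos (Real.pi / a) then (1:ℝ) else -1 := ⟨_, rfl⟩
  have hσabs : |σ| = 1 := by rw [hσ]; split_ifs <;> simp
  have hσcos : σ * Real.cos (Real.pi / a) = cabs := by
    rw [hσ, hcabs]; split_ifs with h
    · rw [abs_of_nonneg h, one_mul]
    · rw [abs_of_neg (not_le.mp h)]; ring
  refine ⟨σ * ε, ?_⟩
  have hxabs : |σ * ε| = ε := by rw [abs_mul, hσabs, one_mul, abs_of_pos hε0]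
  -- the square of the Bessel argument
  have hv2 : (2 / a * ε ^ (a / 2) / 2) ^ 2 = ε ^ a / a ^ 2 := by
    have hsq : ε ^ (a / 2) * ε ^ (a / 2) = ε ^ a := by
      rw [← Real.rpow_add hε0]; norm_num
    have h1 : 2 / a * ε ^ (a / 2) / 2 = ε ^ (a / 2) / a := by ring
    rw [h1, div_pow, pow_two, pow_two, hsq]
  -- bounds on the two Bessel values
  obtain ⟨T1, hT1⟩ : ∃ t : ℝ, t = ε ^ a / a ^ 2 / L1 := ⟨_, rfl⟩
  obtain ⟨T2, hT2⟩ : ∃ t : ℝ, t = ε ^ a / a ^ 2 / L2 := ⟨_, rfl⟩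
  have hT10 : 0 ≤ T1 := by rw [hT1]; positivity
  have hT20 : 0 ≤ T2 := by rw [hT2]; positivity
  have ha2 : (1:ℝ) ≤ a ^ 2 := by nlinarith only [ha1]
  have hεa2 : ε ^ a / a ^ 2 ≤ ε := by
    calc ε ^ a / a ^ 2 ≤ ε ^ a / 1 := div_le_div_of_nonneg_left hεa0.le one_pos ha2
      _ = ε ^ a := div_one _
      _ ≤ ε := hεa_le
  have hT1le : T1 ≤ 1 / (3 * Real.exp 1) := by
    calc T1 ≤ ε / L1 := by rw [hT1]; exact (div_le_div_iff_of_pos_right hL10).mpr hεa2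
      _ ≤ (L1 / (3 * Real.exp 1)) / L1 := (div_le_div_iff_of_pos_right hL10).mpr hεA
      _ = 1 / (3 * Real.exp 1) := by
          rw [div_div, mul_comm (3 * Real.exp 1) L1, ← div_div, div_self hL10.ne']
  have hT2le : T2 ≤ 1 / (3 * Real.exp 1) := by
    calc T2 ≤ ε / L2 := by rw [hT2]; exact (div_le_div_iff_of_pos_right hL20).mpr hεa2
      _ ≤ (L2 / (3 * Real.exp 1)) / L2 := (div_le_div_iff_of_pos_right hL20).mpr hεB
      _ = 1 / (3 * Real.exp 1) := by
          rw [div_div, mul_comm (3 * Real.exp 1) L2, ← div_div, div_self hL20.ne']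
  have hthird : 1 / (3 * Real.exp 1) ≤ 1/6 := by
    rw [div_le_div_iff₀ (by positivity) (by norm_num)]
    linarith
  have hT11 : T1 ≤ 1 := by linarith
  have hT21 : T2 ≤ 1 := by linarith
  have hbA := nbessel_sub_one_abs_le ((2 * κ - 1) / a) (2 / a * ε ^ (a / 2)) hl1
  have hbB := nbessel_sub_one_abs_le ((2 * κ - 1) / a + 2 / a) (2 / a * ε ^ (a / 2))
    (by linarith)
  rw [hv2, ← hL1, ← hT1] at hbA
  rw [hv2] at hbB
  rw [show (2 * κ - 1) / a + 2 / a + 1 = L2 from hL2.symm, ← hT2] at hbB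
  obtain ⟨A, hAdef⟩ : ∃ t : ℝ, t = nbessel ((2 * κ - 1) / a) (2 / a * ε ^ (a / 2)) := ⟨_, rfl⟩
  obtain ⟨B, hBdef⟩ : ∃ t : ℝ, t =
      nbessel ((2 * κ - 1) / a + 2 / a) (2 / a * ε ^ (a / 2)) := ⟨_, rfl⟩
  rw [← hAdef] at hbA
  rw [← hBdef] at hbB
  have hA1 : |A - 1| ≤ T1 * Real.exp 1 :=
    hbA.trans (mul_le_mul_of_nonneg_left (Real.exp_le_exp.mpr hT11) hT10)
  have hB1 : |B - 1| ≤ T2 * Real.exp 1 :=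
    hbB.trans (mul_le_mul_of_nonneg_left (Real.exp_le_exp.mpr hT21) hT20)
  have hT1e : T1 * Real.exp 1 ≤ 1 / 3 := by
    have h1 : T1 * Real.exp 1 ≤ (1 / (3 * Real.exp 1)) * Real.exp 1 :=
      mul_le_mul_of_nonneg_right hT1le he1.le
    have h2 : (1 / (3 * Real.exp 1)) * Real.exp 1 = 1 / 3 := by
      field_simp
    linarith
  have hT2e : T2 * Real.exp 1 ≤ 1 / 3 := by
    have h1 : T2 * Real.exp 1 ≤ (1 / (3 * Real.exp 1)) * Real.exp 1 :=
      mul_le_mul_of_nonneg_right hT2le he1.le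
    have h2 : (1 / (3 * Real.exp 1)) * Real.exp 1 = 1 / 3 := by
      field_simp
    linarith
  have habs1 := abs_le.mp hA1
  have habs2 := abs_le.mp hB1
  have hAlo : 2/3 ≤ A := by linarith [habs1.1]
  have hAhi : A ≤ 4/3 := by linarith [habs1.2]
  have hBlo : 2/3 ≤ B := by linarith [habs2.1]
  -- the key smallness estimate
  have hM : T1 * Real.exp 1 < CR * (ε * cabs) / 5 := by
    have h2 : ε ^ a < K * ε := by
      rw [hεa_eq]; exact mul_lt_mul_of_pos_right hεa1 hε0
    have h3 : T1 * Real.exp 1 = ε ^ a * Real.exp 1 / (a ^ 2 * L1) := by rw [hT1]; ring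
    have h4 : ε ^ a * Real.exp 1 / (a ^ 2 * L1) < K * ε * Real.exp 1 / (a ^ 2 * L1) := by
      apply div_lt_div_of_pos_right ?_ (by positivity)
      exact mul_lt_mul_of_pos_right h2 he1
    have h5 : K * ε * Real.exp 1 / (a ^ 2 * L1) = CR * (ε * cabs) / 5 := by
      rw [hK]; field_simp
    rw [h3, ← h5]; exact h4
  -- expression of the kernel and its norm
  have hb : bker κ a (σ * ε) = ((A : ℝ) : ℂ) +
      Complex.exp (((-(Real.pi / a) : ℝ) : ℂ) * Complex.I) * ((CR * (σ * ε) * B : ℝ) : ℂ) := by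
    rw [hAdef, hBdef, hCR]
    simp only [bker, hxabs]
    push_cast
    ring
  have hnorm : ‖bker κ a (σ * ε)‖ ^ 2 =
      A ^ 2 + 2 * A * (CR * (σ * ε) * B) * Real.cos (-(Real.pi / a)) + (CR * (σ * ε) * B) ^ 2 := by
    rw [hb, norm_sq_form]
  rw [Real.cos_neg] at hnorm
  have hterm : 2 * A * (CR * (σ * ε) * B) * Real.cos (Real.pi / a)
      = 2 * A * CR * B * (ε * cabs) := by
    linear_combination (2 * A * CR * B * ε) * hσcos
  have hQ : 0 < CR * (ε * cabs) := by positivity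
  have h2AB : 8/9 ≤ 2 * (A * B) := by
    have := mul_le_mul hAlo hBlo (by norm_num) (by linarith)
    nlinarith only [this]
  have ht1 : 8/9 * (CR * (ε * cabs)) ≤ 2 * A * CR * B * (ε * cabs) := by
    calc 8/9 * (CR * (ε * cabs)) ≤ 2 * (A * B) * (CR * (ε * cabs)) :=
          mul_le_mul_of_nonneg_right h2AB hQ.le
      _ = 2 * A * CR * B * (ε * cabs) := by ring
  have hTnn : 0 ≤ T1 * Real.exp 1 := by positivity
  have f1 : (-(T1 * Real.exp 1)) * (A + 1) ≤ (A - 1) * (A + 1) :=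
    mul_le_mul_of_nonneg_right habs1.1 (by linarith)
  have f2 : (T1 * Real.exp 1) * (A + 1) ≤ (T1 * Real.exp 1) * (7/3) :=
    mul_le_mul_of_nonneg_left (by linarith) hTnn
  have ht2 : -(7/3 * (T1 * Real.exp 1)) ≤ A ^ 2 - 1 := by nlinarith only [f1, f2]
  have hsq : 1 < ‖bker κ a (σ * ε)‖ ^ 2 := by
    rw [hnorm, hterm]
    nlinarith only [ht1, ht2, hM, hQ, sq_nonneg (CR * (σ * ε) * B)]
  have hn := norm_nonneg (bker κ a (σ * ε))
  nlinarith only [hsq, hn, sq_nonneg (‖bker κ a (σ * ε)‖ - 1)]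
end

section
/- For every integer r ≥ 1, every real λ > −1 and every v ∈ ℝ, one has v^{2r}/(2^{2r}(λ+1)_{2r}) · j_{λ+2r}(v) = (−1)^r j_λ(v) + Σ_{s=1}^{r−1} (−1)^{s+r} · binom(r,s) · ((λ+r)_s/(λ+1)_s) · j_{λ+s}(v) + ((λ+r+1)_{r−1}/(λ+1)_{r−1}) · j_{λ+r}(v). -/
open Real MeasureTheory Finset

/-- Pochhammer symbol (z)_n = z(z+1)...(z+n-1), with (z)_0 = 1. -/
noncomputable def poch (z : ℝ) (n : ℕ) : ℝ := ∏ i ∈ Finset.range n, (z + i)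

lemma poch_zero (z : ℝ) : poch z 0 = 1 := by simp [poch]

lemma poch_succ (z : ℝ) (n : ℕ) : poch z (n+1) = poch z n * (z + n) :=
  Finset.prod_range_succ _ _

lemma poch_succ' (z : ℝ) (n : ℕ) : poch z (n+1) = z * poch (z+1) n := by
  rw [poch, Finset.prod_range_succ', poch, mul_comm]
  congr 1
  · simp
  · exact Finset.prod_congr rfl fun i _ => by push_cast; ring

lemma poch_add (z : ℝ) (a b : ℕ) : poch z (a + b) = poch z a * poch (z + a) b := by
  rw [poch, poch, poch, Finset.prod_range_add]
  congr 1
  exact Finset.prod_congr rfl fun i _ => by push_cast; ring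

lemma poch_pos {z : ℝ} (hz : 0 < z) (n : ℕ) : 0 < poch z n :=
  Finset.prod_pos fun i _ => by positivity

lemma Gamma_poch {z : ℝ} (hz : 0 < z) (n : ℕ) :
    Real.Gamma (z + n) = Real.Gamma z * poch z n := by
  induction n with
  | zero => simp [poch]
  | succ n ih =>
    have h1 : z + ((n+1 : ℕ) : ℝ) = (z + n) + 1 := by push_cast; ring
    have h2 : (0:ℝ) < z + n := by positivity
    rw [h1, Real.Gamma_add_one h2.ne', ih, poch_succ]; ring

lemma poch_nat (k r : ℕ) : (k.factorial : ℝ) * poch ((k:ℝ) + 1) r = ((k + r).factorial : ℝ) := by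
  induction r with
  | zero => simp [poch]
  | succ r ih =>
    rw [poch_succ, ← mul_assoc, ih]
    have : k + (r + 1) = (k + r) + 1 := by omega
    rw [this, Nat.factorial_succ]
    push_cast; ring

lemma chu : ∀ (r : ℕ) (x b : ℝ),
    ∑ s ∈ Finset.range (r+1), (-1:ℝ)^s * (r.choose s : ℝ) * poch b s * poch (x + s) (r - s)
      = poch (x - b) r := by
  intro r
  induction r with
  | zero => intro x b; simp [poch]
  | succ r ih =>
    intro x b
    set g : ℕ → ℝ := fun s => (-1:ℝ)^s * (r.choose s : ℝ) * poch b s * poch ((x+1) + s) (r - s) with hg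
    set w : ℕ → ℝ := fun s => (-1:ℝ)^(s+1) * (r.choose (s+1) : ℝ) * poch b (s+1) * poch ((x+1) + s) (r - s) with hw
    have hmain : ∀ s ∈ Finset.range (r+1),
        (-1:ℝ)^(s+1) * ((r+1).choose (s+1) : ℝ) * poch b (s+1) * poch (x + ((s+1:ℕ):ℝ)) (r+1 - (s+1))
          = (-(b + s)) * g s + w s := by
      intro s hs
      have h2 : (x + ((s+1 : ℕ):ℝ)) = (x+1) + s := by push_cast; ring
      have h3 : r + 1 - (s+1) = r - s := by omega
      rw [h2, h3]
      simp only [hg, hw]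
      rw [Nat.choose_succ_succ, poch_succ b s]
      push_cast
      ring
    have hsplit : ∑ s ∈ Finset.range (r+1+1),
        (-1:ℝ)^s * ((r+1).choose s : ℝ) * poch b s * poch (x + s) (r+1 - s)
        = (∑ s ∈ Finset.range (r+1), ((-(b + s)) * g s + w s)) + poch x (r+1) := by
      rw [Finset.sum_range_succ']
      congr 1
      · exact Finset.sum_congr rfl hmain
      · simp [poch_zero]
    have hT1 : ∀ s ∈ Finset.range (r+1), (x + (s:ℝ)) * g s
        = (-1:ℝ)^s * (r.choose s : ℝ) * poch b s * poch (x + s) (r + 1 - s) := by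
      intro s hs
      rw [Finset.mem_range] at hs
      have h3 : r + 1 - s = (r - s) + 1 := by omega
      rw [h3, poch_succ']
      have h4 : x + (s:ℝ) + 1 = (x+1) + s := by ring
      rw [h4]
      simp only [hg]; ring
    have hsecond : (∑ s ∈ Finset.range (r+1), w s) + poch x (r+1)
        = ∑ s ∈ Finset.range (r+1), (x + (s:ℝ)) * g s := by
      rw [Finset.sum_congr rfl hT1,
        Finset.sum_range_succ' (fun s => (-1:ℝ)^s * (r.choose s : ℝ) * poch b s * poch (x + s) (r+1-s)) r,
        Finset.sum_range_succ w r]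
      have hz : w r = 0 := by simp [hw, Nat.choose_succ_self]
      rw [hz, add_zero]
      congr 1
      · apply Finset.sum_congr rfl
        intro s hs
        simp only [hw]
        have h2 : (x + ((s+1 : ℕ):ℝ)) = (x+1) + s := by push_cast; ring
        have h3 : r + 1 - (s+1) = r - s := by omega
        rw [h2, h3]
      · simp [poch_zero]
    rw [hsplit, Finset.sum_add_distrib, add_assoc, hsecond, ← Finset.sum_add_distrib]
    have hcomb : ∑ s ∈ Finset.range (r+1), ((-(b + (s:ℝ))) * g s + (x + (s:ℝ)) * g s)
        = (x - b) * ∑ s ∈ Finset.range (r+1), g s := by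
      rw [Finset.mul_sum]
      exact Finset.sum_congr rfl fun s _ => by ring
    rw [hcomb]
    simp only [hg]
    rw [ih (x+1) b, poch_succ' (x-b) r]
    have harg : x + 1 - b = (x - b) + 1 := by ring
    rw [harg]

lemma poch_one_le {z : ℝ} (hz : 1 ≤ z) (n : ℕ) : 1 ≤ poch z n := by
  induction n with
  | zero => rw [poch_zero]
  | succ n ih =>
    rw [poch_succ]
    have : (1:ℝ) ≤ z + n := by
      have : (0:ℝ) ≤ n := Nat.cast_nonneg n
      linarith
    nlinarith

lemma poch_min_le {l : ℝ} (hl : -1 < l) (k : ℕ) : min 1 (l+1) ≤ poch (l+1) k := by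
  cases k with
  | zero => rw [poch_zero]; exact min_le_left _ _
  | succ n =>
    rw [poch_succ']
    have h1 : (1:ℝ) ≤ poch (l+1+1) n := poch_one_le (by linarith) n
    have h2 : (0:ℝ) < l + 1 := by linarith
    calc min 1 (l+1) ≤ l + 1 := min_le_right _ _
    _ ≤ (l+1) * poch (l+1+1) n := le_mul_of_one_le_right h2.le h1

lemma Gamma_lb {l : ℝ} (hl : -1 < l) (k : ℕ) :
    Real.Gamma (l+1) * min 1 (l+1) ≤ Real.Gamma ((k:ℝ) + l + 1) := by
  have h1 : ((k:ℝ) + l + 1) = (l+1) + k := by ring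
  rw [h1, Gamma_poch (by linarith)]
  exact mul_le_mul_of_nonneg_left (poch_min_le hl k)
    (Real.Gamma_pos_of_pos (by linarith)).le

lemma Gamma_arg_pos {l : ℝ} (hl : -1 < l) (k : ℕ) : (0:ℝ) < (k:ℝ) + l + 1 := by
  have : (0:ℝ) ≤ k := Nat.cast_nonneg k
  linarith

set_option maxHeartbeats 1000000 in
lemma bessel_summable {l : ℝ} (hl : -1 < l) (v : ℝ) :
    Summable (fun k : ℕ => (-1:ℝ)^k / (Nat.factorial k * Real.Gamma ((k:ℝ) + l + 1)) * (v/2)^(2*k)) := by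
  set c := Real.Gamma (l+1) * min 1 (l+1) with hc
  have hcpos : 0 < c :=
    mul_pos (Real.Gamma_pos_of_pos (by linarith)) (lt_min one_pos (by linarith))
  apply Summable.of_abs
  have hmaj : Summable (fun k : ℕ => (1/c) * (((v/2)^2)^k / (Nat.factorial k))) :=
    (Real.summable_pow_div_factorial ((v/2)^2)).mul_left (1/c)
  refine Summable.of_nonneg_of_le (fun k => abs_nonneg _) ?_ hmaj
  intro k
  have hG : 0 < Real.Gamma ((k:ℝ) + l + 1) := Real.Gamma_pos_of_pos (Gamma_arg_pos hl k)
  have hfac : (0:ℝ) < (Nat.factorial k : ℝ) := by positivity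
  have habs : |(-1:ℝ)^k / (Nat.factorial k * Real.Gamma ((k:ℝ)+l+1)) * (v/2)^(2*k)|
      = ((v/2)^2)^k / ((Nat.factorial k : ℝ) * Real.Gamma ((k:ℝ)+l+1)) := by
    rw [abs_mul, abs_div, abs_pow, abs_neg, abs_one, one_pow, pow_mul, abs_pow, abs_of_nonneg (sq_nonneg (v/2)),
      abs_of_pos (by positivity : (0:ℝ) < (Nat.factorial k : ℝ) * Real.Gamma ((k:ℝ)+l+1))]
    ring
  rw [habs]
  have hle : (Nat.factorial k : ℝ) * c ≤ (Nat.factorial k : ℝ) * Real.Gamma ((k:ℝ)+l+1) :=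
    mul_le_mul_of_nonneg_left (Gamma_lb hl k) hfac.le
  calc ((v/2)^2)^k / ((Nat.factorial k : ℝ) * Real.Gamma ((k:ℝ)+l+1))
      ≤ ((v/2)^2)^k / ((Nat.factorial k : ℝ) * c) :=
        div_le_div_of_nonneg_left (by positivity) (by positivity) hle
    _ = (1/c) * (((v/2)^2)^k / (Nat.factorial k)) := by rw [div_mul_div_comm, one_mul, mul_comm c]

set_option maxHeartbeats 1000000 in
lemma key (r : ℕ) (l : ℝ) (hl : -1 < l) (v : ℝ) :
    v ^ (2 * r) / (2 ^ (2 * r) * poch (l + 1) (2 * r)) * nbessel (l + 2 * r) v =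
      ∑ s ∈ Finset.range (r+1), (-1 : ℝ) ^ (s + r) * (r.choose s : ℝ) *
          (poch (l + r) s / poch (l + 1) s) * nbessel (l + s) v := by
  have hl1 : (0:ℝ) < l + 1 := by linarith
  have hG1 : 0 < Real.Gamma (l+1) := Real.Gamma_pos_of_pos hl1
  set f : ℕ → ℕ → ℝ := fun s k =>
    (-1:ℝ)^k / (Nat.factorial k * Real.Gamma ((k:ℝ) + (l + s) + 1)) * (v/2)^(2*k) with hf
  set F : ℕ → ℝ := fun m => ∑ s ∈ Finset.range (r+1),
    ((-1:ℝ)^(s+r) * (r.choose s : ℝ) * (poch (l + r) s / poch (l + 1) s))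
      * (Real.Gamma (l + s + 1) * f s m) with hF
  -- closed form for F
  have hclosed : ∀ m : ℕ, F m = (-1:ℝ)^(m+r) * Real.Gamma (l+1) * poch ((m:ℝ) - r + 1) r
      / ((Nat.factorial m : ℝ) * Real.Gamma ((m:ℝ) + l + 1) * poch ((m:ℝ) + l + 1) r)
      * (v/2)^(2*m) := by
    intro m
    have hml1 : (0:ℝ) < (m:ℝ) + l + 1 := Gamma_arg_pos hl m
    have hGm : 0 < Real.Gamma ((m:ℝ) + l + 1) := Real.Gamma_pos_of_pos hml1
    have hstep : ∀ s ∈ Finset.range (r+1),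
        ((-1:ℝ)^(s+r) * (r.choose s : ℝ) * (poch (l + r) s / poch (l + 1) s))
          * (Real.Gamma (l + s + 1) * f s m)
        = ((-1:ℝ)^(m+r) * Real.Gamma (l+1)
            / ((Nat.factorial m : ℝ) * Real.Gamma ((m:ℝ) + l + 1) * poch ((m:ℝ) + l + 1) r)
            * (v/2)^(2*m))
          * ((-1:ℝ)^s * (r.choose s : ℝ) * poch (l + r) s
              * poch (((m:ℝ) + l + 1) + s) (r - s)) := by
      intro s hs
      rw [Finset.mem_range] at hs
      have e1 : Real.Gamma (l + s + 1) = Real.Gamma (l+1) * poch (l+1) s := by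
        have h : l + (s:ℝ) + 1 = (l+1) + s := by ring
        rw [h, Gamma_poch hl1]
      have e2 : Real.Gamma ((m:ℝ) + (l + s) + 1)
          = Real.Gamma ((m:ℝ) + l + 1) * poch ((m:ℝ)+l+1) s := by
        have h : (m:ℝ) + (l + s) + 1 = ((m:ℝ)+l+1) + s := by ring
        rw [h, Gamma_poch hml1]
      have e3 : poch ((m:ℝ)+l+1) r = poch ((m:ℝ)+l+1) s * poch (((m:ℝ)+l+1) + (s:ℕ)) (r - s) := by
        rw [← poch_add]
        congr 1
        omega
      have p1 : poch (l+1) s ≠ 0 := (poch_pos hl1 s).ne'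
      have p2 : poch ((m:ℝ)+l+1) s ≠ 0 := (poch_pos hml1 s).ne'
      have p4 : poch (((m:ℝ)+l+1) + (s:ℕ)) (r - s) ≠ 0 := by
        have : (0:ℝ) < ((m:ℝ)+l+1) + (s:ℕ) := by
          have : (0:ℝ) ≤ (s:ℕ) := Nat.cast_nonneg s
          linarith
        exact (poch_pos this _).ne'
      have p3 : (Nat.factorial m : ℝ) ≠ 0 := by positivity
      simp only [hf]
      rw [e1, e2, e3]
      field_simp
      ring
    simp only [hF]
    rw [Finset.sum_congr rfl hstep, ← Finset.mul_sum, chu r ((m:ℝ) + l + 1) (l + r)]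
    have h : (m:ℝ) + l + 1 - (l + r) = (m:ℝ) - r + 1 := by ring
    rw [h]
    ring
  -- F vanishes below r
  have hzero : ∀ m, m < r → F m = 0 := by
    intro m hm
    obtain ⟨j, hj⟩ : ∃ j, r = m + 1 + j := ⟨r - (m+1), by omega⟩
    have hp : poch ((m:ℝ) - r + 1) r = 0 := by
      simp only [poch]
      apply Finset.prod_eq_zero (Finset.mem_range.mpr (show j < r by omega))
      subst hj; push_cast; ring
    rw [hclosed m, hp]
    simp
  -- shifted values
  have hshift : ∀ k : ℕ, F (k + r) = Real.Gamma (l+1) *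
      ((-1:ℝ)^k / (Nat.factorial k * Real.Gamma ((k:ℝ) + (l + 2*(r:ℝ)) + 1)) * (v/2)^(2*(k+r))) := by
    intro k
    rw [hclosed (k+r)]
    have hkr1 : (0:ℝ) < ((k+r:ℕ):ℝ) + l + 1 := Gamma_arg_pos hl (k+r)
    have e1 : ((k+r : ℕ):ℝ) - r + 1 = (k:ℝ) + 1 := by push_cast; ring
    have hGam : Real.Gamma ((k:ℝ) + (l + 2*(r:ℝ)) + 1)
        = Real.Gamma (((k+r:ℕ):ℝ) + l + 1) * poch (((k+r:ℕ):ℝ) + l + 1) r := by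
      have h : (k:ℝ) + (l + 2*(r:ℝ)) + 1 = (((k+r:ℕ):ℝ) + l + 1) + (r:ℕ) := by push_cast; ring
      rw [h, Gamma_poch hkr1]
    have hsgn : (-1:ℝ)^(k + r + r) = (-1)^k := by
      have h2 : k + r + r = k + 2*r := by omega
      rw [h2, pow_add, pow_mul]
      norm_num
    have hfct : ((k+r).factorial : ℝ) = (Nat.factorial k : ℝ) * poch ((k:ℝ) + 1) r :=
      (poch_nat k r).symm
    rw [e1, hGam, hsgn, hfct]
    have hpk : poch ((k:ℝ)+1) r ≠ 0 := (poch_pos (by positivity) r).ne'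
    have hpkr : poch (((k+r:ℕ):ℝ) + l + 1) r ≠ 0 := (poch_pos hkr1 r).ne'
    have hGkr : Real.Gamma (((k+r:ℕ):ℝ) + l + 1) ≠ 0 := (Real.Gamma_pos_of_pos hkr1).ne'
    have hfk : (Nat.factorial k : ℝ) ≠ 0 := by positivity
    rw [show (Nat.factorial k : ℝ) * poch ((k:ℝ)+1) r * Real.Gamma (((k+r:ℕ):ℝ) + l + 1)
          * poch (((k+r:ℕ):ℝ) + l + 1) r
        = poch ((k:ℝ)+1) r * ((Nat.factorial k : ℝ) * Real.Gamma (((k+r:ℕ):ℝ) + l + 1)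
          * poch (((k+r:ℕ):ℝ) + l + 1) r) from by ring]
    rw [show (-1:ℝ)^k * Real.Gamma (l+1) * poch ((k:ℝ)+1) r
        = poch ((k:ℝ)+1) r * ((-1:ℝ)^k * Real.Gamma (l+1)) from by ring]
    rw [mul_div_mul_left _ _ hpk]
    field_simp
    try ring
  -- summability
  have hsum_s : ∀ s : ℕ, Summable (f s) := by
    intro s
    have hls : (-1:ℝ) < l + s := by
      have : (0:ℝ) ≤ (s:ℕ) := Nat.cast_nonneg s
      linarith
    exact bessel_summable hls v
  -- LHS as shifted tsum
  have hLHS : v ^ (2 * r) / (2 ^ (2 * r) * poch (l + 1) (2 * r)) * nbessel (l + 2 * r) v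
      = ∑' k : ℕ, F (k + r) := by
    simp only [nbessel]
    rw [← mul_assoc, ← tsum_mul_left]
    apply tsum_congr
    intro k
    rw [hshift k]
    have hGam2r : Real.Gamma (l + 2*(r:ℝ) + 1) = Real.Gamma (l+1) * poch (l+1) (2*r) := by
      have h : l + 2*(r:ℝ) + 1 = (l+1) + ((2*r : ℕ):ℝ) := by push_cast; ring
      rw [h, Gamma_poch hl1]
    rw [hGam2r]
    have hP : poch (l+1) (2*r) ≠ 0 := (poch_pos hl1 (2*r)).ne'
    have hGk : Real.Gamma ((k:ℝ) + (l + 2*(r:ℝ)) + 1) ≠ 0 :=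
      (Real.Gamma_pos_of_pos (by have := Gamma_arg_pos hl k; have : (0:ℝ) ≤ (r:ℕ) := Nat.cast_nonneg r; have := Gamma_arg_pos hl k; nlinarith [Nat.cast_nonneg (α := ℝ) k, Nat.cast_nonneg (α := ℝ) r])).ne'
    have hfk : (Nat.factorial k : ℝ) ≠ 0 := by positivity
    field_simp
    have h2 : (1/2:ℝ)^(r*2) * 2^(r*2) = 1 := by rw [← mul_pow]; norm_num
    linear_combination (-(v ^ (r * 2) * v ^ (k * 2) * (1 / 2) ^ (k * 2))) * h2
  -- shift the tsum
  have hinj : Function.Injective (fun k : ℕ => k + r) := add_left_injective r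
  have hshift_tsum : ∑' k : ℕ, F (k + r) = ∑' m : ℕ, F m := by
    apply hinj.tsum_eq
    intro m hm
    rcases le_or_gt r m with h | h
    · exact ⟨m - r, by simp; omega⟩
    · exact absurd (hzero m h) (Function.mem_support.mp hm)
  -- RHS
  have hRHS : ∑' m : ℕ, F m = ∑ s ∈ Finset.range (r+1), (-1:ℝ)^(s+r) * (r.choose s : ℝ) *
      (poch (l + r) s / poch (l + 1) s) * nbessel (l + s) v := by
    rw [hF]
    rw [Summable.tsum_finsetSum (fun s _ => (((hsum_s s).mul_left _).mul_left _))]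
    apply Finset.sum_congr rfl
    intro s hs
    rw [tsum_mul_left, tsum_mul_left]
    simp only [nbessel, hf]
  rw [hLHS, hshift_tsum, hRHS]

/-- recurrence decomposition of v^{2r}/(2^{2r}(λ+1)_{2r}) j_{λ+2r}(v). -/
theorem stmt4 (r : ℕ) (hr : 1 ≤ r) (l : ℝ) (hl : -1 < l) (v : ℝ) :
    v ^ (2 * r) / (2 ^ (2 * r) * poch (l + 1) (2 * r)) * nbessel (l + 2 * r) v =
      (-1 : ℝ) ^ r * nbessel l v
      + ∑ s ∈ Finset.Icc 1 (r - 1), (-1 : ℝ) ^ (s + r) * (r.choose s : ℝ) *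
          (poch (l + r) s / poch (l + 1) s) * nbessel (l + s) v
      + (poch (l + r + 1) (r - 1) / poch (l + 1) (r - 1)) * nbessel (l + r) v := by
  obtain ⟨r', rfl⟩ : ∃ r', r = r' + 1 := ⟨r - 1, by omega⟩
  rw [key (r'+1) l hl v]
  have hsucc : (r' + 1) - 1 = r' := by omega
  rw [hsucc]
  set h : ℕ → ℝ := fun s => (-1:ℝ)^(s+(r'+1)) * ((r'+1).choose s : ℝ) *
    (poch (l + (r'+1:ℕ)) s / poch (l + 1) s) * nbessel (l + s) v with hh
  have hsum : ∑ s ∈ Finset.range (r'+1+1), h s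
      = (∑ i ∈ Finset.range r', h (i+1) + h 0) + h (r'+1) := by
    rw [Finset.sum_range_succ, Finset.sum_range_succ']
  rw [hsum]
  have h0 : h 0 = (-1:ℝ)^(r'+1) * nbessel l v := by
    simp [hh, poch_zero]
  have hmid : ∑ i ∈ Finset.range r', h (i+1)
      = ∑ s ∈ Finset.Icc 1 r', (-1:ℝ)^(s+(r'+1)) * ((r'+1).choose s : ℝ) *
          (poch (l + (r'+1:ℕ)) s / poch (l + 1) s) * nbessel (l + s) v := by
    rw [← Finset.Ico_add_one_right_eq_Icc, Finset.sum_Ico_eq_sum_range]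
    have : r' + 1 - 1 = r' := by omega
    rw [this]
    exact Finset.sum_congr rfl fun i _ => by rw [Nat.add_comm 1 i]
  have hlast : h (r'+1) = poch (l + ((r'+1:ℕ):ℝ) + 1) r' / poch (l + 1) r'
      * nbessel (l + ((r'+1:ℕ):ℝ)) v := by
    simp only [hh]
    have e1 : (-1:ℝ)^((r'+1)+(r'+1)) = 1 := Even.neg_one_pow ⟨r'+1, rfl⟩
    have e2 : ((r'+1).choose (r'+1) : ℝ) = 1 := by simp
    have e3 : poch (l + ((r'+1:ℕ):ℝ)) (r'+1) = (l + ((r'+1:ℕ):ℝ)) * poch (l + ((r'+1:ℕ):ℝ) + 1) r' :=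
      poch_succ' _ _
    have e4 : poch (l+1) (r'+1) = poch (l+1) r' * (l + ((r'+1:ℕ):ℝ)) := by
      rw [poch_succ]
      push_cast; ring
    have hne1 : (l + ((r'+1:ℕ):ℝ)) ≠ 0 := by
      have h1 : (1:ℝ) ≤ ((r'+1:ℕ):ℝ) := by exact_mod_cast Nat.one_le_iff_ne_zero.mpr (by omega)
      have : (0:ℝ) < l + ((r'+1:ℕ):ℝ) := by linarith
      exact this.ne'
    rw [e1, e2, e3, e4, one_mul, one_mul,
      mul_comm (poch (l+1) r') (l + ((r'+1:ℕ):ℝ)), mul_div_mul_left _ _ hne1]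
  rw [hmid, h0, hlast]
  simp only [hh]
  ring
end
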